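/- Let K ⊂ ℝ³ be a convex body (a compact convex set with nonempty interior). Suppose that for every 2-dimensional linear subspace E ⊂ ℝ³ the orthogonal projection P_E K is centrally symmetric, i.e., there exists c_E ∈ E such that P_E K = 2c_E − P_E K. Then K itself is centrally symmetric up to translation: there exists a ∈ ℝ³ with K = 2a − K. -/

import Mathlib

open Metric Set Module
open scoped RealInnerProductSpace

noncomputable section

/-- ℝ³ as a Euclidean space. -/
abbrev E3 := EuclideanSpace ℝ (Fin 3)

namespace CSProjAux

/-- Grow a subspace of `E3` to one of dimension 2. -/
lemma grow : ∀ (n : ℕ) (W : Submodule ℝ E3), finrank ℝ W + n = 2 →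
    ∃ E : Submodule ℝ E3, finrank ℝ E = 2 ∧ W ≤ E
  | 0, W, h => ⟨W, by simpa using h, le_rfl⟩
  | n + 1, W, h => by
    have h3 : finrank ℝ E3 = 3 := finrank_euclideanSpace_fin
    have hlt : finrank ℝ W < finrank ℝ E3 := by omega
    obtain ⟨m, hm⟩ := W.exists_of_finrank_lt hlt
    have hmW : m ∉ W := by simpa using hm 1 one_ne_zero
    have hm0 : m ≠ 0 := by rintro rfl; exact hmW W.zero_mem
    have hinf : W ⊓ Submodule.span ℝ {m} = ⊥ := by
      rw [eq_bot_iff]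
      intro x hx
      obtain ⟨hxW, hxS⟩ := Submodule.mem_inf.mp hx
      obtain ⟨r, rfl⟩ := Submodule.mem_span_singleton.mp hxS
      rcases eq_or_ne r 0 with rfl | hr
      · simp
      · exact absurd hxW (hm r hr)
    have hrank : finrank ℝ ↥(W ⊔ Submodule.span ℝ {m}) = finrank ℝ W + 1 := by
      have hq := Submodule.finrank_sup_add_finrank_inf_eq W (Submodule.span ℝ {m})
      rw [hinf, finrank_bot, finrank_span_singleton hm0] at hq
      omega
    obtain ⟨E, hE, hle⟩ := grow n (W ⊔ Submodule.span ℝ {m}) (by omega)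
    exact ⟨E, hE, le_trans le_sup_left hle⟩

lemma finrank_span_singleton_le' (u : E3) : finrank ℝ (Submodule.span ℝ ({u} : Set E3)) ≤ 1 := by
  rcases eq_or_ne u 0 with rfl | hu
  · rw [Submodule.span_zero_singleton]
    simp
  · rw [finrank_span_singleton hu]

/-- Any two vectors of `E3` lie in a common 2-dimensional subspace. -/
lemma exists_plane (u v : E3) : ∃ E : Submodule ℝ E3, finrank ℝ E = 2 ∧ u ∈ E ∧ v ∈ E := by
  have hspan : Submodule.span ℝ ({u, v} : Set E3)
      = Submodule.span ℝ {u} ⊔ Submodule.span ℝ {v} := by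
    rw [Submodule.span_insert]
  have hW : finrank ℝ (Submodule.span ℝ ({u, v} : Set E3)) ≤ 2 := by
    rw [hspan]
    have hq := Submodule.finrank_sup_add_finrank_inf_eq
      (Submodule.span ℝ ({u} : Set E3)) (Submodule.span ℝ ({v} : Set E3))
    have h1 := finrank_span_singleton_le' u
    have h2 := finrank_span_singleton_le' v
    omega
  obtain ⟨E, hE, hle⟩ := grow (2 - finrank ℝ (Submodule.span ℝ ({u, v} : Set E3)))
    (Submodule.span ℝ ({u, v} : Set E3)) (by omega)
  exact ⟨E, hE, hle (Submodule.subset_span (by simp)), hle (Submodule.subset_span (by simp))⟩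

/-- The support function of a set. -/
def hsup (A : Set E3) (u : E3) : ℝ := sSup ((fun y => ⟪u, y⟫) '' A)

lemma isGreatest_hsup {A : Set E3} (hA : IsCompact A) (hne : A.Nonempty) (u : E3) :
    IsGreatest ((fun y => ⟪u, y⟫) '' A) (hsup A u) := by
  have hc : Continuous fun y : E3 => ⟪u, y⟫ := continuous_const.inner continuous_id
  obtain ⟨x, hx⟩ := (hA.image hc).exists_isGreatest (hne.image _)
  rwa [hsup, hx.csSup_eq]

lemma hsup_reflect (A : Set E3) (hA : IsCompact A) (hne : A.Nonempty) (c u : E3) :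
    hsup ((fun x => (2 : ℝ) • c - x) '' A) u = 2 * ⟪u, c⟫ + hsup A (-u) := by
  have h1 := isGreatest_hsup hA hne (-u)
  have key : ∀ y : E3, ⟪u, (2 : ℝ) • c - y⟫ = 2 * ⟪u, c⟫ + ⟪-u, y⟫ := by
    intro y
    rw [inner_sub_right, real_inner_smul_right, inner_neg_left]
    ring
  apply IsGreatest.csSup_eq
  constructor
  · obtain ⟨y, hy, hyv⟩ := h1.1
    have hyv' : ⟪-u, y⟫ = hsup A (-u) := hyv
    refine ⟨(2 : ℝ) • c - y, ⟨y, hy, rfl⟩, ?_⟩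
    show ⟪u, (2 : ℝ) • c - y⟫ = 2 * ⟪u, c⟫ + hsup A (-u)
    rw [key, hyv']
  · rintro z ⟨w, ⟨y, hy, rfl⟩, rfl⟩
    have hb : ⟪-u, y⟫ ≤ hsup A (-u) := h1.2 ⟨y, hy, rfl⟩
    show ⟪u, (2 : ℝ) • c - y⟫ ≤ 2 * ⟪u, c⟫ + hsup A (-u)
    rw [key]
    linarith

lemma hsup_proj (E : Submodule ℝ E3) (A : Set E3) (u : E3) (hu : u ∈ E) :
    hsup ((fun x => ((Submodule.orthogonalProjection E x : E) : E3)) '' A) u = hsup A u := by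
  unfold hsup
  rw [Set.image_image]
  congr 1
  apply Set.image_congr
  intro y _
  have h := Submodule.inner_orthogonalProjection_eq_of_mem_left (K := E) (⟨u, hu⟩ : E) y
  show ⟪u, ((Submodule.orthogonalProjection E y : E) : E3)⟫ = ⟪u, y⟫
  calc ⟪u, ((Submodule.orthogonalProjection E y : E) : E3)⟫
      = ⟪(⟨u, hu⟩ : E), Submodule.orthogonalProjection E y⟫ := (Submodule.coe_inner E ⟨u, hu⟩ (Submodule.orthogonalProjection E y)).symm
    _ = ⟪u, y⟫ := h

lemma subset_of_hsup_le {A B : Set E3} (hA : IsCompact A) (hB : IsCompact B)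
    (hBconv : Convex ℝ B) (hBne : B.Nonempty)
    (hle : ∀ u : E3, hsup A u ≤ hsup B u) : A ⊆ B := by
  intro x hx
  by_contra hxB
  obtain ⟨f, s, hfB, hsx⟩ := geometric_hahn_banach_closed_point hBconv hB.isClosed hxB
  set u := (InnerProductSpace.toDual ℝ E3).symm f with hu
  have hinner : ∀ y : E3, ⟪u, y⟫ = f y := fun y => InnerProductSpace.toDual_symm_apply
  have h1 : f x ≤ hsup A u := by
    rw [← hinner]
    exact le_csSup (hA.image (continuous_const.inner continuous_id)).bddAbove ⟨x, hx, rfl⟩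
  have h2 : hsup B u ≤ s := by
    apply csSup_le (hBne.image _)
    rintro z ⟨y, hy, rfl⟩
    show ⟪u, y⟫ ≤ s
    rw [hinner]
    exact (hfB y hy).le
  linarith [hle u]

end CSProjAux

open CSProjAux

/-- If every orthogonal projection of a convex body `K ⊂ ℝ³` onto a 2-dimensional
linear subspace is centrally symmetric, then `K` is centrally symmetric up to
translation. -/
theorem centrally_symmetric_of_projections (K : Set E3) (hKc : IsCompact K)
    (hKconv : Convex ℝ K) (hKint : (interior K).Nonempty)
    (hproj : ∀ E : Submodule ℝ E3, finrank ℝ E = 2 →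
      ∃ c : E3, c ∈ E ∧
        ((fun x => ((Submodule.orthogonalProjection E x : E) : E3)) '' K) =
          (fun x => (2 : ℝ) • c - x) ''
            ((fun x => ((Submodule.orthogonalProjection E x : E) : E3)) '' K)) :
    ∃ a : E3, K = (fun x => (2 : ℝ) • a - x) '' K := by
  classical
  have hKne : K.Nonempty := hKint.mono interior_subset
  -- step 1: support function identity on each 2-plane
  have main : ∀ E : Submodule ℝ E3, finrank ℝ E = 2 →
      ∃ c, c ∈ E ∧ ∀ u ∈ E, hsup K u = 2 * ⟪u, c⟫ + hsup K (-u) := by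
    intro E hE
    obtain ⟨c, hcE, hsym⟩ := hproj E hE
    refine ⟨c, hcE, fun u hu => ?_⟩
    have hPc : Continuous fun x : E3 => ((Submodule.orthogonalProjection E x : E) : E3) :=
      continuous_subtype_val.comp (Submodule.orthogonalProjection E).continuous
    have hSc : IsCompact ((fun x => ((Submodule.orthogonalProjection E x : E) : E3)) '' K) :=
      hKc.image hPc
    have hSne : ((fun x => ((Submodule.orthogonalProjection E x : E) : E3)) '' K).Nonempty :=
      hKne.image _
    calc hsup K u
        = hsup ((fun x => ((Submodule.orthogonalProjection E x : E) : E3)) '' K) u :=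
          (hsup_proj E K u hu).symm
      _ = hsup ((fun x => (2 : ℝ) • c - x) ''
            ((fun x => ((Submodule.orthogonalProjection E x : E) : E3)) '' K)) u := by rw [← hsym]
      _ = 2 * ⟪u, c⟫
            + hsup ((fun x => ((Submodule.orthogonalProjection E x : E) : E3)) '' K) (-u) :=
          hsup_reflect _ hSc hSne c u
      _ = 2 * ⟪u, c⟫ + hsup K (-u) := by
          rw [hsup_proj E K (-u) (E.neg_mem hu)]
  -- step 2: the "odd part" of the support function is linear
  set f : E3 → ℝ := fun u => hsup K u - hsup K (-u) with hf
  have hfc : ∀ (E : Submodule ℝ E3) (c : E3), c ∈ E →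
      (∀ u ∈ E, hsup K u = 2 * ⟪u, c⟫ + hsup K (-u)) →
      ∀ u ∈ E, f u = 2 * ⟪u, c⟫ := by
    intro E c hcE hc u hu
    have h1 := hc u hu
    have h2 := hc (-u) (E.neg_mem hu)
    rw [neg_neg, inner_neg_left] at h2
    simp only [hf]
    linarith
  have hadd : ∀ u v : E3, f (u + v) = f u + f v := by
    intro u v
    obtain ⟨E, hE, hu, hv⟩ := exists_plane u v
    obtain ⟨c, hcE, hc⟩ := main E hE
    rw [hfc E c hcE hc u hu, hfc E c hcE hc v hv,
      hfc E c hcE hc (u + v) (E.add_mem hu hv), inner_add_left]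
    ring
  have hsmul : ∀ (r : ℝ) (u : E3), f (r • u) = r * f u := by
    intro r u
    obtain ⟨E, hE, hu, -⟩ := exists_plane u u
    obtain ⟨c, hcE, hc⟩ := main E hE
    rw [hfc E c hcE hc u hu, hfc E c hcE hc (r • u) (E.smul_mem r hu),
      real_inner_smul_left]
    ring
  let g : E3 →ₗ[ℝ] ℝ :=
    { toFun := f
      map_add' := hadd
      map_smul' := fun r u => by simpa [smul_eq_mul] using hsmul r u }
  set a' := (InnerProductSpace.toDual ℝ E3).symm (LinearMap.toContinuousLinearMap g) with ha'
  have ha'app : ∀ u : E3, f u = ⟪u, a'⟫ := by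
    intro u
    have h := InnerProductSpace.toDual_symm_apply (𝕜 := ℝ) (E := E3)
      (y := LinearMap.toContinuousLinearMap g) (x := u)
    rw [real_inner_comm]
    exact h.symm
  refine ⟨(1 / 2 : ℝ) • a', ?_⟩
  set K' := (fun x => (2 : ℝ) • ((1 / 2 : ℝ) • a') - x) '' K with hK'
  have hK'c : IsCompact K' := hKc.image (continuous_const.sub continuous_id)
  have hK'conv : Convex ℝ K' := by
    rintro - ⟨x, hx, rfl⟩ - ⟨y, hy, rfl⟩ s t hs ht hst
    refine ⟨s • x + t • y, hKconv hx hy hs ht hst, ?_⟩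
    have hcomb : s • ((2 : ℝ) • ((1 / 2 : ℝ) • a') - x)
        + t • ((2 : ℝ) • ((1 / 2 : ℝ) • a') - y)
        = (s + t) • ((2 : ℝ) • ((1 / 2 : ℝ) • a')) - (s • x + t • y) := by
      module
    rw [hcomb, hst, one_smul]
  have hK'ne : K'.Nonempty := hKne.image _
  have heq : ∀ u : E3, hsup K u = hsup K' u := by
    intro u
    rw [hK', hsup_reflect K hKc hKne _ u]
    have h2 : 2 * ⟪u, (1 / 2 : ℝ) • a'⟫ = f u := by
      rw [ha'app u, real_inner_smul_right]
      ring
    rw [h2]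
    simp only [hf]
    ring
  have hsub1 : K ⊆ K' := subset_of_hsup_le hKc hK'c hK'conv hK'ne fun u => (heq u).le
  have hsub2 : K' ⊆ K := subset_of_hsup_le hK'c hKc hKconv hKne fun u => (heq u).ge
  exact Set.Subset.antisymm hsub1 hsub2

end
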